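/- Let m≥0 be an integer, α>3, β≥0, and η∈ℝ. There is a constant C=C(α,β,η,m) such that uniformly over all 0≤r≤t: ∫∫_{D_tr} ρ · ln^m⟨s−ρ⟩ · ⟨ρ⟩^{-α} ⟨s⟩^{-β} ⟨s−ρ⟩^{-η} ds dρ ≤ C ln^m⟨t−r⟩ · [ κ(α−1, t−r)·⟨t−r⟩^{1−β−η} + κ(η, t−r)·⟨t−r⟩^{2−α−β} ]. -/

import Mathlib

noncomputable section

open MeasureTheory Real Set

/-- Euclidean 3-space. -/
abbrev E3 : Type := EuclideanSpace ℝ (Fin 3)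

/-- Space-time functions on ℝ_t × ℝ³. -/
abbrev STFun : Type := ℝ → E3 → ℝ

/-- Time derivative ∂_t. -/
def pt (u : STFun) : STFun := fun t x => deriv (fun s => u s x) t

/-- Spatial derivative ∂_i. -/
def px (i : Fin 3) (u : STFun) : STFun :=
  fun t x => fderiv ℝ (fun y => u t y) x (EuclideanSpace.single i 1)

/-- Space-time derivatives ∂_μ, μ = 0,…,3. -/
def pd : Fin 4 → STFun → STFun := Fin.cons pt (fun i : Fin 3 => px i)

/-- Iterated space-time derivatives ∂^α of order n. -/
def pdsV : (n : ℕ) → (Fin n → Fin 4) → STFun → STFun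
  | 0, _, u => u
  | n+1, α, u => pd (α 0) (pdsV n (fun i => α i.succ) u)

/-- Rotation vector field Ω_{ij} = x^i ∂_j − x^j ∂_i. -/
def rotV (i j : Fin 3) (u : STFun) : STFun :=
  fun t x => x i * px j u t x - x j * px i u t x

/-- Scaling vector field S = t∂_t + x·∇_x. -/
def scalV (u : STFun) : STFun :=
  fun t x => t * pt u t x + ∑ i : Fin 3, x i * px i u t x

/-- The family Z of commuting vector fields: translations, rotations, scaling. -/
inductive VF : Type
  | d : Fin 4 → VF
  | rot : Fin 3 → Fin 3 → VF
  | scal : VF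
deriving DecidableEq, Fintype

/-- Application of a single vector field. -/
def VF.app : VF → STFun → STFun
  | .d μ => pd μ
  | .rot i j => rotV i j
  | .scal => scalV

/-- Z^J for a word of vector fields of length n. -/
def ZopV : (n : ℕ) → (Fin n → VF) → STFun → STFun
  | 0, _, u => u
  | n+1, w, u => (w 0).app (ZopV n (fun i => w i.succ) u)

/-- Z^J for an arbitrary word, as a list. -/
def Zop : List VF → STFun → STFun
  | [], u => u
  | v :: w, u => v.app (Zop w u)

/-- The symbol class S^Z(f): all vector fields of g are pointwise bounded by f. -/
def SZ (g f : STFun) : Prop :=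
  ∀ w : List VF, ∃ C : ℝ, ∀ t x, |Zop w g t x| ≤ C * |f t x|

/-- Japanese bracket ⟨q⟩ = (1+q²)^{1/2}. -/
def jn (q : ℝ) : ℝ := Real.sqrt (1 + q^2)

/-- ⟨r⟩ = (1+|x|²)^{1/2}. -/
def jr (x : E3) : ℝ := jn ‖x‖

/-- Norm of the full space-time gradient |∂u|. -/
def gradNorm (u : STFun) : STFun := fun t x => Real.sqrt (∑ μ : Fin 4, (pd μ u t x)^2)

/-- L² norm over a space-time region. -/
def L2st (Q : Set (ℝ × E3)) (u : STFun) : ℝ :=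
  (∫ p in Q, (u p.1 p.2)^2) ^ (1/2 : ℝ)

/-- Spatial L² norm over ℝ³. -/
def L2sp (u : E3 → ℝ) : ℝ := (∫ x : E3, (u x)^2) ^ (1/2 : ℝ)

/-- Dyadic annuli A_R, R = 2^k (A_{R=1} = {|x|<2}). -/
def ann : ℕ → Set E3
  | 0 => {x | ‖x‖ < 2}
  | k+1 => {x | (2:ℝ)^(k+1) < ‖x‖ ∧ ‖x‖ < 2^(k+2)}

/-- Local energy norm restricted to a space-time region. -/
def LEQ (Q : Set (ℝ × E3)) (u : STFun) : ℝ :=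
  ⨆ k : ℕ, L2st (Q ∩ {p | p.2 ∈ ann k}) (fun t x => jr x ^ (-(1/2) : ℝ) * u t x)

/-- LE¹ norm restricted to a space-time region. -/
def LE1Q (Q : Set (ℝ × E3)) (u : STFun) : ℝ :=
  LEQ Q (gradNorm u) + LEQ Q (fun t x => (jr x)⁻¹ * u t x)

/-- The slab I × ℝ³. -/
def timeSlab (I : Set ℝ) : Set (ℝ × E3) := {p | p.1 ∈ I}

/-- LE norm on a time interval. -/
def LEnorm (I : Set ℝ) (u : STFun) : ℝ := LEQ (timeSlab I) u

/-- LE¹ norm on a time interval. -/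
def LE1norm (I : Set ℝ) (u : STFun) : ℝ := LE1Q (timeSlab I) u

/-- Dual local energy norm LE*. -/
def LEstar (I : Set ℝ) (f : STFun) : ℝ :=
  ∑' k : ℕ, L2st (timeSlab I ∩ {p | p.2 ∈ ann k}) (fun t x => jr x ^ ((1/2) : ℝ) * f t x)

/-- LE^{1,k}: sum over derivatives ∂^α, |α| ≤ k. -/
def LE1k (k : ℕ) (I : Set ℝ) (u : STFun) : ℝ :=
  ∑ j ∈ Finset.range (k+1), ∑ α : Fin j → Fin 4, LE1norm I (pdsV j α u)

/-- LE^{0,k}. -/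
def LE0k (k : ℕ) (I : Set ℝ) (u : STFun) : ℝ :=
  ∑ j ∈ Finset.range (k+1), ∑ α : Fin j → Fin 4, LEnorm I (pdsV j α u)

/-- LE^{*,k}. -/
def LEstark (k : ℕ) (I : Set ℝ) (f : STFun) : ℝ :=
  ∑ j ∈ Finset.range (k+1), ∑ α : Fin j → Fin 4, LEstar I (pdsV j α f)

/-- Iterated spatial derivatives. -/
def pxsV : (n : ℕ) → (Fin n → Fin 3) → (E3 → ℝ) → (E3 → ℝ)
  | 0, _, u => u
  | n+1, α, u => fun x =>
      fderiv ℝ (pxsV n (fun i => α i.succ) u) x (EuclideanSpace.single (α 0) 1)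

/-- Sobolev H^k norm on ℝ³. -/
def Hknorm (k : ℕ) (u : E3 → ℝ) : ℝ :=
  ∑ j ∈ Finset.range (k+1), ∑ α : Fin j → Fin 3, L2sp (pxsV j α u)

/-- ‖∂u(t₀)‖_{H^k}. -/
def HkGrad (k : ℕ) (u : STFun) (t0 : ℝ) : ℝ :=
  ∑ μ : Fin 4, Hknorm k (fun x => pd μ u t0 x)

/-- L²(I;H¹) norm. -/
def L2H1 (I : Set ℝ) (f : STFun) : ℝ :=
  (∫ t in I, (Hknorm 1 (f t))^2) ^ (1/2 : ℝ)

/-- Weak LE¹ norm with cutoff χ. -/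
def LE1w (χ : E3 → ℝ) (I : Set ℝ) (u : STFun) : ℝ :=
  LEnorm I (fun t x => (1 - χ x) * gradNorm u t x) + LEnorm I (fun t x => u t x / jr x)

/-- Weak LE* norm with cutoff χ. -/
def LEstarw (χ : E3 → ℝ) (I : Set ℝ) (f : STFun) : ℝ :=
  LEstar I (fun t x => (1 - χ x) * f t x) + L2H1 I (fun t x => χ x * f t x)

/-- Weak LE^{1,k}_w. -/
def LE1wk (χ : E3 → ℝ) (k : ℕ) (I : Set ℝ) (u : STFun) : ℝ :=
  ∑ j ∈ Finset.range (k+1), ∑ α : Fin j → Fin 4, LE1w χ I (pdsV j α u)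

/-- Weak LE^{*,k}_w. -/
def LEstarwk (χ : E3 → ℝ) (k : ℕ) (I : Set ℝ) (f : STFun) : ℝ :=
  ∑ j ∈ Finset.range (k+1), ∑ α : Fin j → Fin 4, LEstarw χ I (pdsV j α f)

/-- Coefficients of the operator P: inverse metric g^{αβ}, first-order A^μ, potential V. -/
structure Coeffs : Type where
  g : Fin 4 → Fin 4 → STFun
  A : Fin 4 → STFun
  V : STFun

/-- Minkowski metric diag(−1,1,1,1). -/
def minkM : Matrix (Fin 4) (Fin 4) ℝ :=
  Matrix.diagonal (Fin.cons (-1) (fun _ : Fin 3 => 1))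

/-- h := g − m. -/
def hmet (c : Coeffs) (μ ν : Fin 4) : STFun := fun t x => c.g μ ν t x - minkM μ ν

/-- The operator P u = ∂_α(g^{αβ}∂_β u) + ∂_μ(A^μ u) + V u. -/
def Pop (c : Coeffs) (u : STFun) : STFun := fun t x =>
  (∑ μ : Fin 4, ∑ ν : Fin 4, pd μ (fun s y => c.g μ ν s y * pd ν u s y) t x)
  + (∑ μ : Fin 4, pd μ (fun s y => c.A μ s y * u s y) t x)
  + c.V t x * u t x

/-- A symmetric matrix of Lorentzian signature (congruent to Minkowski). -/
def IsLorentzMatrix (G : Matrix (Fin 4) (Fin 4) ℝ) : Prop :=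
  G.IsSymm ∧ ∃ L : Matrix (Fin 4) (Fin 4) ℝ, IsUnit L.det ∧ G = L * minkM * L.transpose

/-- The coefficient matrix g^{αβ}(t,x). -/
def metricMatrix (c : Coeffs) (t : ℝ) (x : E3) : Matrix (Fin 4) (Fin 4) ℝ :=
  Matrix.of fun μ ν => c.g μ ν t x

/-- g is Lorentzian and the slices {t = t₀} are space-like (g^{00} < 0). -/
def LorentzianSpacelike (c : Coeffs) : Prop :=
  ∀ t x, IsLorentzMatrix (metricMatrix c t x) ∧ c.g 0 0 t x < 0

/-- The weight ⟨r⟩^a. -/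
def rpowWeight (a : ℝ) : STFun := fun _ x => jr x ^ a

/-- Coefficient bounds of part (1) of the main theorem. -/
def CoeffBounds1 (c : Coeffs) (σ δ : ℝ) : Prop :=
  (∀ μ ν, SZ (hmet c μ ν) (rpowWeight (-(1+σ)))) ∧
  (∀ μ, SZ (c.A μ) (rpowWeight (-(1+σ)))) ∧
  (∀ μ, SZ (pt (c.A μ)) (rpowWeight (-(2+σ)))) ∧
  SZ c.V (rpowWeight (-(2+δ)))

/-- Additional coefficient bounds of part (2) of the main theorem. -/
def CoeffBounds2 (c : Coeffs) (σ δ : ℝ) : Prop :=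
  (∀ μ ν, SZ (hmet c μ ν) (rpowWeight (-(1+σ)))) ∧
  SZ c.V (rpowWeight (-(2+δ))) ∧
  (∀ μ ν, SZ (pt (hmet c μ ν)) (rpowWeight (-(2+σ)))) ∧
  (∀ μ ν, SZ (pt (pt (hmet c μ ν)))
      (fun t x => (jn (t+‖x‖) * (jn (t-‖x‖))⁻¹ * (jr x)⁻¹)^2 * jr x ^ (-(1+σ)))) ∧
  (∀ μ, SZ (c.A μ) (rpowWeight (-(2+σ)))) ∧
  (∀ μ, SZ (pt (c.A μ))
      (fun t x => jn (t+‖x‖) * (jn (t-‖x‖))⁻¹ * (jr x)⁻¹ * jr x ^ (-(2+σ))))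

/-- The weak local energy decay estimate with a given cutoff. -/
def WeakLEDwith (c : Coeffs) (χ : E3 → ℝ) : Prop :=
  ∀ k : ℕ, ∃ C : ℝ, 0 < C ∧ ∀ ψ : STFun, ∀ T0 : ℝ, 0 ≤ T0 →
    LE1wk χ k (Set.Ici T0) ψ ≤ C * (HkGrad k ψ T0 + LEstarwk χ k (Set.Ici T0) (Pop c ψ))

/-- The weak local energy decay estimate. -/
def WeakLED (c : Coeffs) : Prop :=
  ∃ χ : E3 → ℝ, ContDiff ℝ (⊤ : ℕ∞) χ ∧ HasCompactSupport χ ∧ WeakLEDwith c χ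

/-- The stationary local energy decay estimate. -/
def StatLED (c : Coeffs) : Prop :=
  ∀ k : ℕ, ∃ C : ℝ, 0 < C ∧ ∀ ψ : STFun, ∀ T1 T2 : ℝ, 0 ≤ T1 → T1 ≤ T2 →
    LE1k k (Set.Icc T1 T2) ψ ≤
      C * (HkGrad k ψ T1 + HkGrad k ψ T2 + LEstark k (Set.Icc T1 T2) (Pop c ψ)
           + LE0k k (Set.Icc T1 T2) (pt ψ))

/-- Sum of the quantity F over all vector fields Z^J u, |J| ≤ m. -/
def sumZle (m : ℕ) (F : STFun → ℝ) (u : STFun) : ℝ :=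
  ∑ j ∈ Finset.range (m+1), ∑ w : Fin j → VF, F (ZopV j w u)

/-- Weighted initial-data norm ‖⟨r⟩^γ ∂φ_{≤N}(0)‖_{L²(ℝ³)}. -/
def dataNorm (γ : ℝ) (N : ℕ) (φ : STFun) : ℝ :=
  sumZle N (fun v => L2sp (fun x => jr x ^ γ * gradNorm v 0 x)) φ

/-- Dyadic numbers (powers of 2, at least 1). -/
def Dyadic2 (r : ℝ) : Prop := ∃ k : ℕ, r = 2^k

/-- The slab C_T = {T ≤ t ≤ 2T, r ≤ t}. -/
def CT (T : ℝ) : Set (ℝ × E3) := {p | T ≤ p.1 ∧ p.1 ≤ 2*T ∧ ‖p.2‖ ≤ p.1}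

def shellR (R : ℝ) : Set (ℝ × E3) :=
  {p | if R = 1 then ‖p.2‖ < 2 else R < ‖p.2‖ ∧ ‖p.2‖ < 2*R}

def shellU (U : ℝ) : Set (ℝ × E3) :=
  {p | if U = 1 then p.1 - ‖p.2‖ < 2 else U < p.1 - ‖p.2‖ ∧ p.1 - ‖p.2‖ < 2*U}

/-- Region C^R_T. -/
def CRT (T R : ℝ) : Set (ℝ × E3) := CT T ∩ shellR R

/-- Region C^U_T. -/
def CUT (T U : ℝ) : Set (ℝ × E3) := CT T ∩ shellU U

/-- Slight enlargements. -/
def tCT (T : ℝ) : Set (ℝ × E3) := {p | 3*T/4 ≤ p.1 ∧ p.1 ≤ 9*T/4 ∧ ‖p.2‖ ≤ 9*p.1/8}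

def tshellR (R : ℝ) : Set (ℝ × E3) :=
  {p | if R = 1 then ‖p.2‖ < 3 else 3*R/4 < ‖p.2‖ ∧ ‖p.2‖ < 3*R}

def tshellU (U : ℝ) : Set (ℝ × E3) :=
  {p | if U = 1 then p.1 - ‖p.2‖ < 3 else 3*U/4 < p.1 - ‖p.2‖ ∧ p.1 - ‖p.2‖ < 3*U}

def tCRT (T R : ℝ) : Set (ℝ × E3) := tCT T ∩ tshellR R

def tCUT (T U : ℝ) : Set (ℝ × E3) := tCT T ∩ tshellU U

/-- Exterior region C^R_U. -/
def CRUext (R : ℝ) : Set (ℝ × E3) :=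
  {p | p.1 ≤ ‖p.2‖ ∧ R ≤ ‖p.2‖ ∧ ‖p.2‖ ≤ 2*R ∧ R ≤ ‖p.2‖ - p.1 ∧ ‖p.2‖ - p.1 ≤ 2*R}

def tCRUext (R : ℝ) : Set (ℝ × E3) :=
  {p | p.1 ≤ ‖p.2‖ ∧ 3*R/4 ≤ ‖p.2‖ ∧ ‖p.2‖ ≤ 3*R ∧ 3*R/4 ≤ ‖p.2‖ - p.1 ∧ ‖p.2‖ - p.1 ≤ 3*R}

/-- Exterior region C^T_U. -/
def CTUext (T U : ℝ) : Set (ℝ × E3) :=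
  {p | p.1 ≤ ‖p.2‖ ∧ T ≤ p.1 ∧ p.1 ≤ 2*T ∧
    (if U = 1 then ‖p.2‖ - p.1 < 2 else U < ‖p.2‖ - p.1 ∧ ‖p.2‖ - p.1 < 2*U)}

def tCTUext (T U : ℝ) : Set (ℝ × E3) :=
  {p | p.1 ≤ ‖p.2‖ ∧ 3*T/4 ≤ p.1 ∧ p.1 ≤ 9*T/4 ∧
    (if U = 1 then ‖p.2‖ - p.1 < 3 else 3*U/4 < ‖p.2‖ - p.1 ∧ ‖p.2‖ - p.1 < 3*U)}

/-- Interior region C^{<3T/4}_T = ∪_{R<3T/8} C^R_T. -/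
def CltT (T : ℝ) : Set (ℝ × E3) := ⋃ k : ℕ, ⋃ (_ : (2:ℝ)^k < 3*T/8), CRT T (2^k)

def tCltT (T : ℝ) : Set (ℝ × E3) := ⋃ k : ℕ, ⋃ (_ : (2:ℝ)^k < 3*T/8), tCRT T (2^k)

/-- Iterated scaling S^n. -/
def iterS : ℕ → STFun → STFun
  | 0, u => u
  | n+1, u => scalV (iterS n u)

/-- Iterated rotations Ω^n. -/
def iterRot : (n : ℕ) → (Fin n → Fin 3 × Fin 3) → STFun → STFun
  | 0, _, u => u
  | n+1, ρ, u => rotV (ρ 0).1 (ρ 0).2 (iterRot n (fun i => ρ i.succ) u)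

/-- Σ_{i≤1, j≤2} F(S^i Ω^j w). -/
def sumSO (F : STFun → ℝ) (w : STFun) : ℝ :=
  ∑ i ∈ Finset.range 2, ∑ j ∈ Finset.range 3, ∑ ρ : Fin j → Fin 3 × Fin 3,
    F (iterS i (iterRot j ρ w))

/-- Σ_{k+j≤2} F(S^k Ω^j w). -/
def sumSO2 (F : STFun → ℝ) (w : STFun) : ℝ :=
  ∑ k ∈ Finset.range 3, ∑ j ∈ Finset.range (3-k), ∑ ρ : Fin j → Fin 3 × Fin 3,
    F (iterS k (iterRot j ρ w))

/-- L∞ norm over a space-time region. -/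
def LinfQ (Q : Set (ℝ × E3)) (u : STFun) : ℝ := ⨆ p ∈ Q, |u p.1 p.2|

/-- The region D_{tr} of the one-dimensional reduction, in (ρ,s) coordinates. -/
def Dtr (t r : ℝ) : Set (ℝ × ℝ) :=
  {p | 0 ≤ p.2 - p.1 ∧ p.2 - p.1 ≤ t - r ∧ t - r ≤ p.2 + p.1 ∧ p.2 + p.1 ≤ t + r}

/-- The function κ(λ, q). -/
def kap (lam q : ℝ) : ℝ :=
  if 1 < lam then 1 else if lam = 1 then Real.log (jn q) else (jn q) ^ (1 - lam)


-- Auxiliary lemmas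
section CAuxSection
open Filter Topology

lemma jn_pos (q : ℝ) : 0 < jn q := Real.sqrt_pos.2 (by positivity)

lemma jn_one_le (q : ℝ) : 1 ≤ jn q := Real.one_le_sqrt.2 (by nlinarith [sq_nonneg q])

lemma jn_nonneg (q : ℝ) : 0 ≤ jn q := (jn_pos q).le

lemma jn_mono {a b : ℝ} (ha : 0 ≤ a) (hab : a ≤ b) : jn a ≤ jn b :=
  Real.sqrt_le_sqrt (by nlinarith)

lemma le_jn (q : ℝ) : q ≤ jn q := by
  have : |q| ≤ jn q := by
    rw [← Real.sqrt_sq_eq_abs]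
    exact Real.sqrt_le_sqrt (by nlinarith)
  exact (le_abs_self q).trans this

lemma jn_le_one_add {q : ℝ} (h : 0 ≤ q) : jn q ≤ 1 + q := by
  rw [jn, show (1:ℝ) + q = Real.sqrt ((1+q)^2) by rw [Real.sqrt_sq (by linarith)]]
  exact Real.sqrt_le_sqrt (by nlinarith)

lemma one_add_le_sqrt2_jn {q : ℝ} (h : 0 ≤ q) : 1 + q ≤ Real.sqrt 2 * jn q := by
  rw [jn, ← Real.sqrt_mul (by norm_num),
    show (1:ℝ) + q = Real.sqrt ((1+q)^2) by rw [Real.sqrt_sq (by linarith)]]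
  exact Real.sqrt_le_sqrt (by nlinarith [sq_nonneg (1-q)])

lemma jn_half (q : ℝ) : jn q ≤ 2 * jn (q/2) := by
  have h4 : Real.sqrt 4 = 2 := by
    rw [show (4:ℝ) = 2^2 by norm_num, Real.sqrt_sq (by norm_num : (0:ℝ) ≤ 2)]
  have h2 : 2 * jn (q/2) = Real.sqrt (4 * (1 + (q/2)^2)) := by
    rw [jn, Real.sqrt_mul (by norm_num : (0:ℝ) ≤ 4), h4]
  rw [h2, jn]
  exact Real.sqrt_le_sqrt (by nlinarith)

lemma jn_zero : jn 0 = 1 := by simp [jn]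

lemma log_jn_nonneg (q : ℝ) : 0 ≤ Real.log (jn q) := Real.log_nonneg (jn_one_le q)

lemma cont_jn : Continuous jn := by
  apply Real.continuous_sqrt.comp
  continuity

lemma cont_jn_rpow (e : ℝ) : Continuous (fun x : ℝ => jn x ^ e) :=
  cont_jn.rpow_const (fun x => Or.inl (jn_pos x).ne')

/-- derivative helper -/
lemma hasDerivAt_one_add_rpow (p : ℝ) {u : ℝ} (hu : 0 ≤ u) :
    HasDerivAt (fun x : ℝ => (1+x) ^ p) (p * (1+u) ^ (p-1)) u := by
  have h1 : HasDerivAt (fun x : ℝ => 1 + x) 1 u := (hasDerivAt_id u).const_add 1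
  have h2 := Real.hasDerivAt_rpow_const (x := 1+u) (p := p) (Or.inl (by positivity))
  have h3 := h2.comp u h1
  rw [mul_one] at h3
  exact h3

/-- Tail estimate: ∫_{x ≥ a} ⟨x⟩^{-λ} ≲ ⟨a⟩^{1-λ} for λ > 1. -/
lemma tail_lemma {lam : ℝ} (hlam : 1 < lam) :
    ∃ C : ℝ, 0 < C ∧ ∀ a : ℝ, 0 ≤ a →
      (∫⁻ x in Ici a, ENNReal.ofReal (jn x ^ (-lam))) ≤
        ENNReal.ofReal (C * jn a ^ (1 - lam)) := by
  refine ⟨Real.sqrt 2 ^ lam * (lam - 1)⁻¹,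
    mul_pos (by positivity) (inv_pos.2 (by linarith)), fun a ha => ?_⟩
  set c : ℝ := Real.sqrt 2 ^ lam with hc
  have hcpos : 0 < c := by positivity
  set F : ℝ → ℝ := fun x => -(lam-1)⁻¹ * (1+x) ^ (1-lam) with hF
  have hderiv : ∀ x ∈ Ici a, HasDerivAt F ((1+x) ^ (-lam)) x := by
    intro x hx
    have h0 : (0:ℝ) ≤ x := le_trans ha hx
    have := (hasDerivAt_one_add_rpow (1-lam) h0).const_mul (-(lam-1)⁻¹)
    refine this.congr_deriv ?_
    symm
    have hne : lam - 1 ≠ 0 := by intro h; exact absurd hlam (by linarith)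
    rw [show (1:ℝ)-lam-1 = -lam by ring]
    field_simp
    ring
  have hpos : ∀ x ∈ Ioi a, (0:ℝ) ≤ (1+x) ^ (-lam) := by
    intro x hx
    have h1x : (0:ℝ) ≤ 1 + x := by have := hx.out; linarith
    exact Real.rpow_nonneg h1x _
  have htend : Tendsto F atTop (𝓝 0) := by
    have h1 : Tendsto (fun x : ℝ => (1+x) ^ (-(lam-1))) atTop (𝓝 0) :=
      (tendsto_rpow_neg_atTop (by linarith)).comp (tendsto_atTop_add_const_left _ 1 tendsto_id)
    have : Tendsto (fun x : ℝ => -(lam-1)⁻¹ * (1+x) ^ (-(lam-1))) atTop (𝓝 (-(lam-1)⁻¹ * 0)) :=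
      h1.const_mul _
    simpa [hF, show -(lam-1) = 1-lam by ring] using this
  have hint : IntegrableOn (fun x => (1+x) ^ (-lam)) (Ioi a) :=
    integrableOn_Ioi_deriv_of_nonneg' hderiv hpos htend
  have hval : ∫ x in Ioi a, (1+x) ^ (-lam) = (lam-1)⁻¹ * (1+a) ^ (1-lam) := by
    rw [integral_Ioi_of_hasDerivAt_of_nonneg' hderiv hpos htend]
    simp only [hF]
    ring
  calc ∫⁻ x in Ici a, ENNReal.ofReal (jn x ^ (-lam))
      = ∫⁻ x in Ioi a, ENNReal.ofReal (jn x ^ (-lam)) := by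
        exact setLIntegral_congr Ioi_ae_eq_Ici.symm
    _ ≤ ∫⁻ x in Ioi a, ENNReal.ofReal (c * (1+x) ^ (-lam)) := by
        apply setLIntegral_mono' measurableSet_Ioi
        intro x hx
        apply ENNReal.ofReal_le_ofReal
        have hx0 : (0:ℝ) ≤ x := le_trans ha (le_of_lt hx)
        have h1 : (1+x)/Real.sqrt 2 ≤ jn x := by
          rw [div_le_iff₀ (by positivity)]
          calc 1 + x ≤ Real.sqrt 2 * jn x := one_add_le_sqrt2_jn hx0
          _ = jn x * Real.sqrt 2 := by ring
        have h2 : jn x ^ (-lam) ≤ ((1+x)/Real.sqrt 2) ^ (-lam) :=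
          Real.rpow_le_rpow_of_nonpos (by positivity) h1 (by linarith)
        calc jn x ^ (-lam) ≤ ((1+x)/Real.sqrt 2) ^ (-lam) := h2
          _ = c * (1+x) ^ (-lam) := by
              rw [Real.div_rpow (by positivity) (Real.sqrt_nonneg 2), hc,
                div_eq_mul_inv, ← Real.rpow_neg (Real.sqrt_nonneg 2), neg_neg]
              ring
    _ = ENNReal.ofReal (∫ x in Ioi a, c * (1+x) ^ (-lam)) := by
        rw [ofReal_integral_eq_lintegral_ofReal (hint.const_mul c)]
        apply (ae_restrict_iff' measurableSet_Ioi).2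
        apply ae_of_all
        intro x hx
        have h1x : (0:ℝ) < 1 + x := by
          have : a < x := hx
          linarith
        have := Real.rpow_nonneg h1x.le (-lam)
        positivity
    _ ≤ ENNReal.ofReal (Real.sqrt 2 ^ lam * (lam - 1)⁻¹ * jn a ^ (1-lam)) := by
        apply ENNReal.ofReal_le_ofReal
        rw [integral_const_mul, hval]
        have : (1+a) ^ (1-lam) ≤ jn a ^ (1-lam) :=
          Real.rpow_le_rpow_of_nonpos (jn_pos a) (jn_le_one_add ha) (by linarith)
        have h3 : (0:ℝ) ≤ (lam-1)⁻¹ := inv_nonneg.2 (by linarith)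
        calc c * ((lam-1)⁻¹ * (1+a) ^ (1-lam)) ≤ c * ((lam-1)⁻¹ * jn a ^ (1-lam)) := by
              apply mul_le_mul_of_nonneg_left _ hcpos.le
              exact mul_le_mul_of_nonneg_left this h3
          _ = Real.sqrt 2 ^ lam * (lam - 1)⁻¹ * jn a ^ (1-lam) := by rw [hc]; ring


lemma tail_rho {α : ℝ} (hα : 3 < α) :
    ∃ C : ℝ, 0 < C ∧ ∀ a : ℝ, 0 ≤ a →
      (∫⁻ x in Ici a, ENNReal.ofReal (x * jn x ^ (-α))) ≤
        ENNReal.ofReal (C * jn a ^ (2-α)) := by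
  obtain ⟨C, hC, hb⟩ := tail_lemma (lam := α - 1) (by linarith)
  refine ⟨C, hC, fun a ha => ?_⟩
  have h1 : ∀ x ∈ Ici a, x * jn x ^ (-α) ≤ jn x ^ (-(α-1)) := by
    intro x hx
    calc x * jn x ^ (-α) ≤ jn x * jn x ^ (-α) :=
          mul_le_mul_of_nonneg_right ((le_jn x)) (Real.rpow_nonneg (jn_nonneg x) _)
      _ = jn x ^ (-(α-1)) := by
          rw [show -(α-1) = 1 + (-α) by ring, Real.rpow_add (jn_pos x), Real.rpow_one]
  calc ∫⁻ x in Ici a, ENNReal.ofReal (x * jn x ^ (-α))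
      ≤ ∫⁻ x in Ici a, ENNReal.ofReal (jn x ^ (-(α-1))) :=
        setLIntegral_mono' measurableSet_Ici
          (fun x hx => ENNReal.ofReal_le_ofReal (h1 x hx))
    _ ≤ ENNReal.ofReal (C * jn a ^ (1-(α-1))) := hb a ha
    _ = ENNReal.ofReal (C * jn a ^ (2-α)) := by rw [show (1:ℝ)-(α-1) = 2-α by ring]

lemma one_le_sqrt2 : (1:ℝ) ≤ Real.sqrt 2 := Real.one_le_sqrt.2 one_le_two

lemma jn_rpow_le_one_add (η : ℝ) {u : ℝ} (hu : 0 ≤ u) :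
    jn u ^ (-η) ≤ Real.sqrt 2 ^ |η| * (1+u) ^ (-η) := by
  have h1u : (0:ℝ) < 1 + u := by linarith
  have habs : Real.sqrt 2 ^ η ≤ Real.sqrt 2 ^ |η| :=
    Real.rpow_le_rpow_of_exponent_le one_le_sqrt2 (le_abs_self η)
  have hone : (1:ℝ) ≤ Real.sqrt 2 ^ |η| := by
    rw [← Real.rpow_zero (Real.sqrt 2)]
    exact Real.rpow_le_rpow_of_exponent_le one_le_sqrt2 (abs_nonneg η)
  rcases le_or_gt 0 η with h | h
  · have h1 : (1+u)/Real.sqrt 2 ≤ jn u := by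
      rw [div_le_iff₀ (by positivity)]
      calc 1 + u ≤ Real.sqrt 2 * jn u := one_add_le_sqrt2_jn hu
        _ = jn u * Real.sqrt 2 := by ring
    calc jn u ^ (-η) ≤ ((1+u)/Real.sqrt 2) ^ (-η) :=
          Real.rpow_le_rpow_of_nonpos (by positivity) h1 (by linarith)
      _ = Real.sqrt 2 ^ η * (1+u) ^ (-η) := by
          rw [Real.div_rpow h1u.le (Real.sqrt_nonneg 2), div_eq_mul_inv,
            ← Real.rpow_neg (Real.sqrt_nonneg 2), neg_neg]
          ring
      _ ≤ Real.sqrt 2 ^ |η| * (1+u) ^ (-η) :=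
          mul_le_mul_of_nonneg_right habs (Real.rpow_nonneg h1u.le _)
  · have h2 : jn u ^ (-η) ≤ (1+u) ^ (-η) :=
      Real.rpow_le_rpow (jn_nonneg u) (jn_le_one_add hu) (by linarith)
    have h3 : (0:ℝ) ≤ (1+u) ^ (-η) := Real.rpow_nonneg h1u.le _
    nlinarith

lemma intInt_one_add (η : ℝ) {q : ℝ} (hq : 0 ≤ q) :
    IntervalIntegrable (fun u : ℝ => (1+u) ^ (-η)) volume 0 q := by
  apply ContinuousOn.intervalIntegrable
  apply ContinuousOn.rpow_const
  · exact (continuous_const.add continuous_id).continuousOn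
  · intro u hu
    rw [uIcc_of_le hq] at hu
    left
    nlinarith [hu.1]

lemma ftc_rpow {η : ℝ} (hη : η ≠ 1) {q : ℝ} (hq : 0 ≤ q) :
    ∫ u in (0:ℝ)..q, (1+u) ^ (-η) = (1-η)⁻¹ * ((1+q) ^ (1-η) - 1) := by
  have hne : (1:ℝ) - η ≠ 0 := by intro h; exact hη (by linarith)
  have hderiv : ∀ u ∈ uIcc (0:ℝ) q,
      HasDerivAt (fun x => (1-η)⁻¹ * (1+x) ^ (1-η)) ((1+u) ^ (-η)) u := by
    intro u hu
    rw [uIcc_of_le hq] at hu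
    have := (hasDerivAt_one_add_rpow (1-η) hu.1).const_mul ((1-η)⁻¹)
    refine this.congr_deriv ?_
    symm
    rw [show (1:ℝ)-η-1 = -η by ring]
    field_simp
  rw [intervalIntegral.integral_eq_sub_of_hasDerivAt hderiv (intInt_one_add η hq)]
  norm_num
  ring

lemma ftc_log {q : ℝ} (hq : 0 ≤ q) :
    ∫ u in (0:ℝ)..q, (1+u) ^ (-(1:ℝ)) = Real.log (1+q) := by
  have hderiv : ∀ u ∈ uIcc (0:ℝ) q,
      HasDerivAt (fun x => Real.log (1+x)) ((1+u) ^ (-(1:ℝ))) u := by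
    intro u hu
    rw [uIcc_of_le hq] at hu
    have h0 : (0:ℝ) < 1 + u := by nlinarith [hu.1]
    have h1 : HasDerivAt (fun x : ℝ => 1 + x) 1 u := (hasDerivAt_id u).const_add 1
    have := (Real.hasDerivAt_log h0.ne').comp u h1
    rw [Real.rpow_neg_one]
    simp only [mul_one] at this
    exact this
  rw [intervalIntegral.integral_eq_sub_of_hasDerivAt hderiv (intInt_one_add 1 hq)]
  norm_num

lemma kap_nonneg (lam q : ℝ) : 0 ≤ kap lam q := by
  unfold kap
  split
  · norm_num
  · split
    · exact log_jn_nonneg q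
    · exact Real.rpow_nonneg (jn_nonneg q) _

lemma fin_lemma (η : ℝ) : ∃ C : ℝ, 0 < C ∧ ∀ q : ℝ, 0 ≤ q →
    (∫⁻ u in Icc 0 q, ENNReal.ofReal (jn u ^ (-η))) ≤
      ENNReal.ofReal (C * (kap η q + 1)) := by
  set c : ℝ := Real.sqrt 2 ^ |η| with hc
  have hcpos : 0 < c := by positivity
  have key : ∀ q : ℝ, 0 ≤ q →
      (∫⁻ u in Icc 0 q, ENNReal.ofReal (jn u ^ (-η))) ≤
        ENNReal.ofReal (c * ∫ u in (0:ℝ)..q, (1+u) ^ (-η)) := by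
    intro q hq
    have hint : IntegrableOn (fun u : ℝ => (1+u) ^ (-η)) (Icc 0 q) := by
      apply ContinuousOn.integrableOn_compact isCompact_Icc
      apply ContinuousOn.rpow_const
      · exact (continuous_const.add continuous_id).continuousOn
      · intro u hu
        left
        nlinarith [hu.1]
    calc ∫⁻ u in Icc 0 q, ENNReal.ofReal (jn u ^ (-η))
        ≤ ∫⁻ u in Icc 0 q, ENNReal.ofReal (c * (1+u) ^ (-η)) :=
          setLIntegral_mono' measurableSet_Icc
            (fun u hu => ENNReal.ofReal_le_ofReal (jn_rpow_le_one_add η hu.1))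
      _ = ENNReal.ofReal (∫ u in Icc 0 q, c * (1+u) ^ (-η)) := by
          rw [ofReal_integral_eq_lintegral_ofReal (hint.const_mul c)]
          apply (ae_restrict_iff' measurableSet_Icc).2
          apply ae_of_all
          intro u hu
          have h1u : (0:ℝ) < 1 + u := by nlinarith [hu.1]
          have := Real.rpow_nonneg h1u.le (-η)
          positivity
      _ = ENNReal.ofReal (c * ∫ u in (0:ℝ)..q, (1+u) ^ (-η)) := by
          rw [MeasureTheory.integral_Icc_eq_integral_Ioc,
            ← intervalIntegral.integral_of_le hq, intervalIntegral.integral_const_mul]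
  rcases lt_trichotomy η 1 with h | h | h
  · -- η < 1
    have hI : (0:ℝ) < (1-η)⁻¹ := inv_pos.2 (by linarith)
    refine ⟨c * (1-η)⁻¹ * Real.sqrt 2 ^ (1-η), by positivity, fun q hq => ?_⟩
    refine (key q hq).trans (ENNReal.ofReal_le_ofReal ?_)
    rw [ftc_rpow h.ne hq]
    have hkap : kap η q = jn q ^ (1-η) := by
      rw [kap, if_neg (by linarith), if_neg h.ne]
    have h1 : (1+q) ^ (1-η) ≤ Real.sqrt 2 ^ (1-η) * jn q ^ (1-η) := by
      rw [← Real.mul_rpow (Real.sqrt_nonneg 2) (jn_nonneg q)]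
      exact Real.rpow_le_rpow (by linarith) (one_add_le_sqrt2_jn hq) (by linarith)
    have h2 : (0:ℝ) ≤ jn q ^ (1-η) := Real.rpow_nonneg (jn_nonneg q) _
    have h3 : (0:ℝ) ≤ Real.sqrt 2 ^ (1-η) := Real.rpow_nonneg (Real.sqrt_nonneg 2) _
    rw [hkap]
    have h4 : (1+q) ^ (1-η) - 1 ≤ Real.sqrt 2 ^ (1-η) * (jn q ^ (1-η) + 1) := by nlinarith
    calc c * ((1-η)⁻¹ * ((1+q) ^ (1-η) - 1))
        = (c * (1-η)⁻¹) * ((1+q) ^ (1-η) - 1) := by ring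
      _ ≤ (c * (1-η)⁻¹) * (Real.sqrt 2 ^ (1-η) * (jn q ^ (1-η) + 1)) :=
          mul_le_mul_of_nonneg_left h4 (by positivity)
      _ = c * (1-η)⁻¹ * Real.sqrt 2 ^ (1-η) * (jn q ^ (1-η) + 1) := by ring
  · -- η = 1
    subst h
    have hl2 : (0:ℝ) ≤ Real.log (Real.sqrt 2) := Real.log_nonneg one_le_sqrt2
    refine ⟨c * (Real.log (Real.sqrt 2) + 1), by positivity, fun q hq => ?_⟩
    refine (key q hq).trans (ENNReal.ofReal_le_ofReal ?_)
    rw [ftc_log hq]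
    have hkap : kap 1 q = Real.log (jn q) := by
      rw [kap, if_neg (lt_irrefl 1), if_pos rfl]
    have h1 : Real.log (1+q) ≤ Real.log (Real.sqrt 2) + Real.log (jn q) := by
      rw [← Real.log_mul (by positivity) (jn_pos q).ne']
      exact Real.log_le_log (by linarith) (one_add_le_sqrt2_jn hq)
    have h2 : (0:ℝ) ≤ Real.log (jn q) := log_jn_nonneg q
    rw [hkap]
    have h4 : Real.log (1+q) ≤ (Real.log (Real.sqrt 2) + 1) * (Real.log (jn q) + 1) := by
      nlinarith [mul_nonneg hl2 h2]
    calc c * Real.log (1+q)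
        ≤ c * ((Real.log (Real.sqrt 2) + 1) * (Real.log (jn q) + 1)) :=
          mul_le_mul_of_nonneg_left h4 hcpos.le
      _ = c * (Real.log (Real.sqrt 2) + 1) * (Real.log (jn q) + 1) := by ring
  · -- 1 < η
    have hI : (0:ℝ) < (η-1)⁻¹ := inv_pos.2 (by linarith)
    refine ⟨c * (η-1)⁻¹, by positivity, fun q hq => ?_⟩
    refine (key q hq).trans (ENNReal.ofReal_le_ofReal ?_)
    rw [ftc_rpow h.ne' hq]
    have hkap : kap η q = 1 := by rw [kap, if_pos h]
    have h1 : (0:ℝ) ≤ (1+q) ^ (1-η) := Real.rpow_nonneg (by linarith) _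
    have h2 : (1-η)⁻¹ * ((1+q) ^ (1-η) - 1) ≤ (η-1)⁻¹ := by
      rw [show (1-η)⁻¹ = -(η-1)⁻¹ by rw [show (1:ℝ)-η = -(η-1) by ring, inv_neg]]
      nlinarith
    rw [hkap]
    calc c * ((1-η)⁻¹ * ((1+q) ^ (1-η) - 1)) ≤ c * (η-1)⁻¹ :=
          mul_le_mul_of_nonneg_left h2 hcpos.le
      _ ≤ c * (η-1)⁻¹ * (1+1) := by nlinarith


lemma rpow_half_bound {e : ℝ} (he : e ≤ 0) {q x : ℝ} (hq : 0 ≤ q) (hx : q/2 ≤ x) :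
    jn x ^ e ≤ (2:ℝ) ^ (-e) * jn q ^ e := by
  have h1 : jn q / 2 ≤ jn x := by
    have h2 := jn_half q
    have h3 := jn_mono (by linarith : (0:ℝ) ≤ q/2) hx
    linarith
  calc jn x ^ e ≤ (jn q / 2) ^ e :=
        Real.rpow_le_rpow_of_nonpos (div_pos (jn_pos q) two_pos) h1 he
    _ = 2 ^ (-e) * jn q ^ e := by
        rw [Real.div_rpow (jn_nonneg q) (by norm_num : (0:ℝ) ≤ 2), div_eq_mul_inv,
          ← Real.rpow_neg (by norm_num : (0:ℝ) ≤ 2)]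
        ring

lemma two_rpow_le_abs (η : ℝ) : (2:ℝ) ^ η ≤ (2:ℝ) ^ |η| :=
  Real.rpow_le_rpow_of_exponent_le one_le_two (le_abs_self η)

lemma one_le_two_rpow_abs (η : ℝ) : (1:ℝ) ≤ (2:ℝ) ^ |η| := by
  rw [← Real.rpow_zero 2]
  exact Real.rpow_le_rpow_of_exponent_le one_le_two (abs_nonneg η)

lemma mid_bound (η : ℝ) {q u : ℝ} (hq : 0 ≤ q) (h1 : q/2 ≤ u) (h2 : u ≤ q) :
    jn u ^ (-η) ≤ (2:ℝ) ^ |η| * jn q ^ (-η) := by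
  have hX : (0:ℝ) ≤ jn q ^ (-η) := Real.rpow_nonneg (jn_nonneg q) _
  rcases le_or_gt 0 η with h | h
  · have hb := rpow_half_bound (e := -η) (by linarith) hq h1
    rw [neg_neg] at hb
    calc jn u ^ (-η) ≤ 2 ^ η * jn q ^ (-η) := hb
      _ ≤ 2 ^ |η| * jn q ^ (-η) := mul_le_mul_of_nonneg_right (two_rpow_le_abs η) hX
  · have hmono : jn u ^ (-η) ≤ jn q ^ (-η) :=
      Real.rpow_le_rpow (jn_nonneg u) (jn_mono (by linarith) h2) (by linarith)
    nlinarith [one_le_two_rpow_abs η]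

lemma lint_ofReal_const_mul {X : Type*} [MeasurableSpace X] {μ : Measure X}
    {c : ℝ} (hc : 0 ≤ c) (f : X → ℝ) (s : Set X) :
    ∫⁻ x in s, ENNReal.ofReal (c * f x) ∂μ =
      ENNReal.ofReal c * ∫⁻ x in s, ENNReal.ofReal (f x) ∂μ := by
  simp_rw [ENNReal.ofReal_mul hc]
  exact lintegral_const_mul' _ _ ENNReal.ofReal_ne_top

lemma meas_Dtr (t r : ℝ) : MeasurableSet (Dtr t r) := by
  have hs : Dtr t r = {p : ℝ×ℝ | 0 ≤ p.2 - p.1} ∩ ({p | p.2 - p.1 ≤ t-r} ∩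
      ({p | t-r ≤ p.2+p.1} ∩ {p | p.2+p.1 ≤ t+r})) := by
    ext p
    simp [Dtr, Set.mem_setOf_eq, and_assoc]
  rw [hs]
  have hsub : Measurable (fun p : ℝ×ℝ => p.2 - p.1) := measurable_snd.sub measurable_fst
  have hadd : Measurable (fun p : ℝ×ℝ => p.2 + p.1) := measurable_snd.add measurable_fst
  exact (measurableSet_le measurable_const hsub).inter
    ((measurableSet_le hsub measurable_const).inter
      ((measurableSet_le measurable_const hadd).inter (measurableSet_le hadd measurable_const)))

lemma core_bound {α : ℝ} (hα : 3 < α) (η : ℝ) :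
    ∃ K : ℝ, 0 < K ∧ ∀ t r : ℝ, 0 ≤ r → r ≤ t →
      (∫⁻ p in Dtr t r, ENNReal.ofReal (p.1 * jn p.1 ^ (-α) * jn (p.2 - p.1) ^ (-η))) ≤
      ENNReal.ofReal (K * ((kap η (t-r) + 1) * jn (t-r) ^ (2-α) + jn (t-r) ^ (-η))) := by
  obtain ⟨Ct, hCt, htail⟩ := tail_rho hα
  obtain ⟨Ct2, hCt2, htail2⟩ := tail_lemma (lam := α-2) (by linarith)
  obtain ⟨Cb, hCb, hfin⟩ := fin_lemma η
  have hc2 : (0:ℝ) < (2:ℝ) ^ (α-2) := by positivity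
  set c2 : ℝ := (2:ℝ) ^ (α-2) with hc2def
  have hcη : (0:ℝ) < (2:ℝ) ^ |η| := by positivity
  set cη : ℝ := (2:ℝ) ^ |η| with hcηdef
  set C1 : ℝ := Ct * c2 with hC1def
  have hC1 : 0 < C1 := mul_pos hCt hc2
  refine ⟨C1 * c2 * Cb + C1 * cη * Ct2,
    add_pos (mul_pos (mul_pos hC1 hc2) hCb) (mul_pos (mul_pos hC1 hcη) hCt2),
    fun t r hr hrt => ?_⟩
  set q : ℝ := t - r with hqdef
  have hq : 0 ≤ q := by rw [hqdef]; linarith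
  have hX : (0:ℝ) ≤ jn q ^ (2-α) := Real.rpow_nonneg (jn_nonneg q) _
  have hY : (0:ℝ) ≤ jn q ^ (-η) := Real.rpow_nonneg (jn_nonneg q) _
  set g : ℝ × ℝ → ENNReal :=
    fun p => ENNReal.ofReal (p.1 * jn p.1 ^ (-α) * jn (p.2 - p.1) ^ (-η)) with hgdef
  have hgmeas : Measurable g := by
    apply Measurable.ennreal_ofReal
    have h1 : Continuous fun p : ℝ×ℝ => jn p.1 ^ (-α) :=
      (cont_jn.comp continuous_fst).rpow_const (fun p => Or.inl (jn_pos _).ne')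
    have h2 : Continuous fun p : ℝ×ℝ => jn (p.2 - p.1) ^ (-η) :=
      (cont_jn.comp (continuous_snd.sub continuous_fst)).rpow_const
        (fun p => Or.inl (jn_pos _).ne')
    exact ((continuous_fst.mul h1).mul h2).measurable
  have hφmeas : Measurable fun p => (Dtr t r).indicator g p :=
    hgmeas.indicator (meas_Dtr t r)
  have hψmeas : Measurable (fun z : ℝ × ℝ => (Dtr t r).indicator g (z.1, z.2 + z.1)) :=
    hφmeas.comp (measurable_fst.prodMk (measurable_snd.add measurable_fst))
  have step1 : (∫⁻ p in Dtr t r, g p)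
      = ∫⁻ u : ℝ, ∫⁻ ρ : ℝ, (Dtr t r).indicator g (ρ, u + ρ) := by
    rw [← lintegral_indicator (meas_Dtr t r) g]
    have hpr : (∫⁻ p, (Dtr t r).indicator g p ∂(volume : Measure (ℝ×ℝ)))
        = ∫⁻ ρ : ℝ, ∫⁻ s : ℝ, (Dtr t r).indicator g (ρ, s) := by
      rw [MeasureTheory.Measure.volume_eq_prod]
      exact lintegral_prod _ hφmeas.aemeasurable
    rw [hpr]
    have hsh : ∀ ρ : ℝ, (∫⁻ s : ℝ, (Dtr t r).indicator g (ρ, s))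
        = ∫⁻ u : ℝ, (Dtr t r).indicator g (ρ, u + ρ) := fun ρ =>
      (lintegral_add_right_eq_self (fun s => (Dtr t r).indicator g (ρ, s)) ρ).symm
    simp_rw [hsh]
    exact lintegral_lintegral_swap hψmeas.aemeasurable
  rw [step1]
  have inner : ∀ u : ℝ, (∫⁻ ρ : ℝ, (Dtr t r).indicator g (ρ, u + ρ)) ≤
      (Icc 0 q).indicator
        (fun u => ENNReal.ofReal (C1 * (jn u ^ (-η) * jn (q - u) ^ (2-α)))) u := by
    intro u
    by_cases hu : u ∈ Icc 0 q
    · rw [indicator_of_mem hu]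
      have hu2 : (0:ℝ) ≤ (q-u)/2 := by have := hu.2; linarith
      have hb : ∀ ρ : ℝ, (Dtr t r).indicator g (ρ, u + ρ) ≤ (Ici ((q-u)/2)).indicator
          (fun ρ => ENNReal.ofReal (jn u ^ (-η)) * ENNReal.ofReal (ρ * jn ρ ^ (-α))) ρ := by
        intro ρ
        by_cases hρ : ρ ∈ Ici ((q-u)/2)
        · rw [indicator_of_mem hρ]
          by_cases hmem : (ρ, u + ρ) ∈ Dtr t r
          · rw [indicator_of_mem hmem]
            show ENNReal.ofReal (ρ * jn ρ ^ (-α) * jn ((u + ρ) - ρ) ^ (-η)) ≤ _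
            rw [show u + ρ - ρ = u by ring,
              ← ENNReal.ofReal_mul (Real.rpow_nonneg (jn_nonneg u) _)]
            exact ENNReal.ofReal_le_ofReal (le_of_eq (by ring))
          · rw [indicator_of_notMem hmem]
            exact zero_le
        · rw [indicator_of_notMem hρ]
          have hnm : (ρ, u + ρ) ∉ Dtr t r := by
            intro hmem
            simp only [Dtr, mem_setOf_eq] at hmem
            obtain ⟨h1, h2, h3, h4⟩ := hmem
            exact hρ (by simp only [mem_Ici]; linarith [hqdef])
          rw [indicator_of_notMem hnm]
      calc (∫⁻ ρ : ℝ, (Dtr t r).indicator g (ρ, u + ρ))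
          ≤ ∫⁻ ρ : ℝ, (Ici ((q-u)/2)).indicator
              (fun ρ => ENNReal.ofReal (jn u ^ (-η)) * ENNReal.ofReal (ρ * jn ρ ^ (-α))) ρ :=
            lintegral_mono hb
        _ = ∫⁻ ρ in Ici ((q-u)/2),
              ENNReal.ofReal (jn u ^ (-η)) * ENNReal.ofReal (ρ * jn ρ ^ (-α)) :=
            lintegral_indicator measurableSet_Ici _
        _ = ENNReal.ofReal (jn u ^ (-η)) *
              ∫⁻ ρ in Ici ((q-u)/2), ENNReal.ofReal (ρ * jn ρ ^ (-α)) :=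
            lintegral_const_mul' _ _ ENNReal.ofReal_ne_top
        _ ≤ ENNReal.ofReal (jn u ^ (-η)) * ENNReal.ofReal (Ct * jn ((q-u)/2) ^ (2-α)) :=
            mul_le_mul_right (htail _ hu2) _
        _ ≤ ENNReal.ofReal (jn u ^ (-η)) * ENNReal.ofReal (Ct * (c2 * jn (q-u) ^ (2-α))) := by
            apply mul_le_mul_right
            apply ENNReal.ofReal_le_ofReal
            apply mul_le_mul_of_nonneg_left _ hCt.le
            have hbb := rpow_half_bound (e := 2-α) (by linarith)
              (by linarith [hu.2] : (0:ℝ) ≤ q - u) (le_refl ((q-u)/2))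
            rw [show -(2-α) = α - 2 by ring, ← hc2def] at hbb
            exact hbb
        _ = ENNReal.ofReal (C1 * (jn u ^ (-η) * jn (q-u) ^ (2-α))) := by
            rw [← ENNReal.ofReal_mul (Real.rpow_nonneg (jn_nonneg u) _)]
            congr 1
            rw [hC1def]
            ring
    · rw [indicator_of_notMem hu]
      have hz : ∀ ρ : ℝ, (Dtr t r).indicator g (ρ, u + ρ) = 0 := by
        intro ρ
        apply indicator_of_notMem
        intro hmem
        simp only [Dtr, mem_setOf_eq] at hmem
        obtain ⟨h1, h2, h3, h4⟩ := hmem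
        exact hu ⟨by linarith, by linarith [hqdef]⟩
      simp only [hz]
      simp
  calc (∫⁻ u : ℝ, ∫⁻ ρ : ℝ, (Dtr t r).indicator g (ρ, u + ρ))
      ≤ ∫⁻ u : ℝ, (Icc 0 q).indicator
          (fun u => ENNReal.ofReal (C1 * (jn u ^ (-η) * jn (q - u) ^ (2-α)))) u :=
        lintegral_mono inner
    _ = ∫⁻ u in Icc 0 q, ENNReal.ofReal (C1 * (jn u ^ (-η) * jn (q - u) ^ (2-α))) :=
        lintegral_indicator measurableSet_Icc _
    _ ≤ (∫⁻ u in Icc 0 (q/2), ENNReal.ofReal (C1 * (jn u ^ (-η) * jn (q - u) ^ (2-α))))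
        + ∫⁻ u in Ioc (q/2) q, ENNReal.ofReal (C1 * (jn u ^ (-η) * jn (q - u) ^ (2-α))) := by
        rw [← Icc_union_Ioc_eq_Icc (by linarith : (0:ℝ) ≤ q/2) (by linarith : q/2 ≤ q)]
        exact lintegral_union_le _ _ _
    _ ≤ ENNReal.ofReal (C1 * c2 * Cb * ((kap η q + 1) * jn q ^ (2-α)))
        + ENNReal.ofReal (C1 * cη * Ct2 * jn q ^ (-η)) := by
        apply add_le_add
        · calc (∫⁻ u in Icc 0 (q/2), ENNReal.ofReal (C1 * (jn u ^ (-η) * jn (q - u) ^ (2-α))))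
              ≤ ∫⁻ u in Icc 0 (q/2),
                  ENNReal.ofReal ((C1 * c2 * jn q ^ (2-α)) * (jn u ^ (-η))) := by
                apply setLIntegral_mono' measurableSet_Icc
                intro u hu
                apply ENNReal.ofReal_le_ofReal
                have hb := rpow_half_bound (e := 2-α) (by linarith) hq
                  (by linarith [hu.2] : q/2 ≤ q - u)
                rw [show -(2-α) = α - 2 by ring, ← hc2def] at hb
                have hA : (0:ℝ) ≤ jn u ^ (-η) := Real.rpow_nonneg (jn_nonneg u) _
                calc C1 * (jn u ^ (-η) * jn (q-u) ^ (2-α))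
                    = (C1 * jn u ^ (-η)) * jn (q-u) ^ (2-α) := by ring
                  _ ≤ (C1 * jn u ^ (-η)) * (c2 * jn q ^ (2-α)) :=
                      mul_le_mul_of_nonneg_left hb (mul_nonneg hC1.le hA)
                  _ = (C1 * c2 * jn q ^ (2-α)) * (jn u ^ (-η)) := by ring
            _ = ENNReal.ofReal (C1 * c2 * jn q ^ (2-α)) *
                  ∫⁻ u in Icc 0 (q/2), ENNReal.ofReal (jn u ^ (-η)) :=
                lint_ofReal_const_mul
                  (mul_nonneg (mul_nonneg hC1.le hc2.le) hX) _ _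
            _ ≤ ENNReal.ofReal (C1 * c2 * jn q ^ (2-α)) *
                  ∫⁻ u in Icc 0 q, ENNReal.ofReal (jn u ^ (-η)) :=
                mul_le_mul_right (lintegral_mono_set (Icc_subset_Icc le_rfl (by linarith))) _
            _ ≤ ENNReal.ofReal (C1 * c2 * jn q ^ (2-α)) *
                  ENNReal.ofReal (Cb * (kap η q + 1)) :=
                mul_le_mul_right (hfin q hq) _
            _ = ENNReal.ofReal (C1 * c2 * Cb * ((kap η q + 1) * jn q ^ (2-α))) := by
                rw [← ENNReal.ofReal_mul (mul_nonneg (mul_nonneg hC1.le hc2.le) hX)]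
                congr 1
                ring
        · calc (∫⁻ u in Ioc (q/2) q, ENNReal.ofReal (C1 * (jn u ^ (-η) * jn (q - u) ^ (2-α))))
              ≤ ∫⁻ u in Ioc (q/2) q,
                  ENNReal.ofReal ((C1 * cη * jn q ^ (-η)) * (jn (q-u) ^ (2-α))) := by
                apply setLIntegral_mono' measurableSet_Ioc
                intro u hu
                apply ENNReal.ofReal_le_ofReal
                have hb := mid_bound η hq (le_of_lt hu.1) hu.2
                rw [← hcηdef] at hb
                have hB : (0:ℝ) ≤ jn (q-u) ^ (2-α) := Real.rpow_nonneg (jn_nonneg _) _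
                calc C1 * (jn u ^ (-η) * jn (q-u) ^ (2-α))
                    = (C1 * jn (q-u) ^ (2-α)) * jn u ^ (-η) := by ring
                  _ ≤ (C1 * jn (q-u) ^ (2-α)) * (cη * jn q ^ (-η)) :=
                      mul_le_mul_of_nonneg_left hb (mul_nonneg hC1.le hB)
                  _ = (C1 * cη * jn q ^ (-η)) * (jn (q-u) ^ (2-α)) := by ring
            _ = ENNReal.ofReal (C1 * cη * jn q ^ (-η)) *
                  ∫⁻ u in Ioc (q/2) q, ENNReal.ofReal (jn (q-u) ^ (2-α)) :=
                lint_ofReal_const_mul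
                  (mul_nonneg (mul_nonneg hC1.le hcη.le) hY) _ _
            _ ≤ ENNReal.ofReal (C1 * cη * jn q ^ (-η)) * ENNReal.ofReal Ct2 := by
                apply mul_le_mul_right
                have hrefl : (∫⁻ u in Ioc (q/2) q, ENNReal.ofReal (jn (q-u) ^ (2-α)))
                    = ∫⁻ w in Ico 0 (q/2), ENNReal.ofReal (jn w ^ (2-α)) := by
                  have hmp := Measure.measurePreserving_sub_left (volume : Measure ℝ) q
                  have hemb : MeasurableEmbedding (fun x : ℝ => q - x) :=
                    (Homeomorph.subLeft q).measurableEmbedding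
                  have hset : (fun x : ℝ => q - x) ⁻¹' (Ico 0 (q/2)) = Ioc (q/2) q := by
                    ext x
                    simp only [mem_preimage, mem_Ico, mem_Ioc]
                    constructor
                    · intro h
                      exact ⟨by linarith [h.2], by linarith [h.1]⟩
                    · intro h
                      exact ⟨by linarith [h.2], by linarith [h.1]⟩
                  rw [← hset]
                  exact hmp.setLIntegral_comp_preimage_emb hemb
                    (fun w => ENNReal.ofReal (jn w ^ (2-α))) (Ico 0 (q/2))
                rw [hrefl]
                calc (∫⁻ w in Ico 0 (q/2), ENNReal.ofReal (jn w ^ (2-α)))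
                    ≤ ∫⁻ w in Ici 0, ENNReal.ofReal (jn w ^ (2-α)) :=
                      lintegral_mono_set Ico_subset_Ici_self
                  _ = ∫⁻ w in Ici 0, ENNReal.ofReal (jn w ^ (-(α-2))) := by
                      simp_rw [show (2:ℝ)-α = -(α-2) by ring]
                  _ ≤ ENNReal.ofReal (Ct2 * jn 0 ^ (1-(α-2))) := htail2 0 le_rfl
                  _ = ENNReal.ofReal Ct2 := by
                      rw [jn_zero, Real.one_rpow, mul_one]
            _ = ENNReal.ofReal (C1 * cη * Ct2 * jn q ^ (-η)) := by
                rw [← ENNReal.ofReal_mul (mul_nonneg (mul_nonneg hC1.le hcη.le) hY)]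
                congr 1
                ring
    _ ≤ ENNReal.ofReal ((C1 * c2 * Cb + C1 * cη * Ct2) *
          ((kap η q + 1) * jn q ^ (2-α) + jn q ^ (-η))) := by
        have hk : (0:ℝ) ≤ kap η q := kap_nonneg η q
        have hA1 : (0:ℝ) ≤ C1 * c2 * Cb * ((kap η q + 1) * jn q ^ (2-α)) := by
          apply mul_nonneg (mul_nonneg (mul_nonneg hC1.le hc2.le) hCb.le)
          exact mul_nonneg (by linarith) hX
        have hA2 : (0:ℝ) ≤ C1 * cη * Ct2 * jn q ^ (-η) :=
          mul_nonneg (mul_nonneg (mul_nonneg hC1.le hcη.le) hCt2.le) hY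
        rw [← ENNReal.ofReal_add hA1 hA2]
        apply ENNReal.ofReal_le_ofReal
        nlinarith [mul_nonneg (mul_nonneg (mul_nonneg hC1.le hcη.le) hCt2.le)
            (mul_nonneg (by linarith : (0:ℝ) ≤ kap η q + 1) hX),
          mul_nonneg (mul_nonneg (mul_nonneg hC1.le hc2.le) hCb.le) hY]


end CAuxSection


/-- the one-dimensional reduction integral bound, case α > 3. -/
theorem conversion_integral_bound_high (m : ℕ) (α β η : ℝ)
    (hα : 3 < α) (hβ : 0 ≤ β) :
    ∃ C : ℝ, 0 < C ∧ ∀ t r : ℝ, 0 ≤ r → r ≤ t →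
      (∫ p in Dtr t r,
        p.1 * (Real.log (jn (p.2 - p.1)))^m * jn p.1 ^ (-α) * jn p.2 ^ (-β) *
          jn (p.2 - p.1) ^ (-η)) ≤
      C * (Real.log (jn (t - r)))^m *
        (kap (α-1) (t-r) * jn (t-r) ^ (1-β-η)
          + kap η (t-r) * jn (t-r) ^ (2-α-β)) := by
  obtain ⟨K, hK, hcore⟩ := core_bound hα η
  have h2β : (0:ℝ) < (2:ℝ)^β := by positivity
  refine ⟨2 * (2:ℝ)^β * K, by positivity, fun t r hr hrt => ?_⟩
  set q : ℝ := t - r with hqdef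
  have hq : 0 ≤ q := by rw [hqdef]; linarith
  set L : ℝ := Real.log (jn q) with hLdef
  have hL : 0 ≤ L := log_jn_nonneg q
  have hLm : 0 ≤ L^m := pow_nonneg hL m
  have hkapA : kap (α-1) q = 1 := by rw [kap, if_pos (by linarith : (1:ℝ) < α-1)]
  have hkapN : 0 ≤ kap η q := kap_nonneg η q
  have hB1 : (0:ℝ) ≤ jn q ^ (1-β-η) := Real.rpow_nonneg (jn_nonneg q) _
  have hA1 : (0:ℝ) ≤ jn q ^ (2-α-β) := Real.rpow_nonneg (jn_nonneg q) _
  have hX : (0:ℝ) ≤ jn q ^ (2-α) := Real.rpow_nonneg (jn_nonneg q) _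
  have hY : (0:ℝ) ≤ jn q ^ (-η) := Real.rpow_nonneg (jn_nonneg q) _
  have hW : (0:ℝ) ≤ jn q ^ (-β) := Real.rpow_nonneg (jn_nonneg q) _
  have hRHS : 0 ≤ 2 * (2:ℝ)^β * K * L^m *
      (kap (α-1) q * jn q ^ (1-β-η) + kap η q * jn q ^ (2-α-β)) := by
    apply mul_nonneg (mul_nonneg (by positivity) hLm)
    rw [hkapA]
    nlinarith [mul_nonneg hkapN hA1]
  set f : ℝ × ℝ → ℝ := fun p =>
    p.1 * (Real.log (jn (p.2 - p.1)))^m * jn p.1 ^ (-α) * jn p.2 ^ (-β) *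
      jn (p.2 - p.1) ^ (-η) with hfdef
  have hfc : Continuous f := by
    rw [hfdef]
    have h1 : Continuous fun p : ℝ×ℝ => jn p.1 ^ (-α) :=
      (cont_jn.comp continuous_fst).rpow_const (fun p => Or.inl (jn_pos _).ne')
    have h2 : Continuous fun p : ℝ×ℝ => jn (p.2 - p.1) ^ (-η) :=
      (cont_jn.comp (continuous_snd.sub continuous_fst)).rpow_const
        (fun p => Or.inl (jn_pos _).ne')
    have h3 : Continuous fun p : ℝ×ℝ => jn p.2 ^ (-β) :=
      (cont_jn.comp continuous_snd).rpow_const (fun p => Or.inl (jn_pos _).ne')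
    have h4 : Continuous fun p : ℝ×ℝ => (Real.log (jn (p.2 - p.1)))^m :=
      ((cont_jn.comp (continuous_snd.sub continuous_fst)).log
        (fun p => (jn_pos _).ne')).pow m
    exact ((((continuous_fst.mul h4).mul h1).mul h3).mul h2)
  have hDm := meas_Dtr t r
  have hnn : ∀ p ∈ Dtr t r, 0 ≤ f p := by
    intro p hp
    obtain ⟨h1, h2, h3, h4⟩ := hp
    have hρ : 0 ≤ p.1 := by linarith
    exact mul_nonneg (mul_nonneg (mul_nonneg (mul_nonneg hρ
      (pow_nonneg (log_jn_nonneg _) m)) (Real.rpow_nonneg (jn_nonneg _) _))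
      (Real.rpow_nonneg (jn_nonneg _) _)) (Real.rpow_nonneg (jn_nonneg _) _)
  have heq : (∫ p in Dtr t r, f p) = (∫⁻ p in Dtr t r, ENNReal.ofReal (f p)).toReal := by
    apply integral_eq_lintegral_of_nonneg_ae
    · exact (ae_restrict_iff' hDm).2 (ae_of_all _ hnn)
    · exact hfc.aestronglyMeasurable.restrict
  rw [heq]
  apply ENNReal.toReal_le_of_le_ofReal hRHS
  have hco := hcore t r hr hrt
  rw [← hqdef] at hco
  have hc0 : (0:ℝ) ≤ (2:ℝ)^β * L^m * jn q ^ (-β) :=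
    mul_nonneg (mul_nonneg h2β.le hLm) hW
  calc (∫⁻ p in Dtr t r, ENNReal.ofReal (f p))
      ≤ ∫⁻ p in Dtr t r, ENNReal.ofReal (((2:ℝ)^β * L^m * jn q ^ (-β)) *
          (p.1 * jn p.1 ^ (-α) * jn (p.2 - p.1) ^ (-η))) := by
        apply setLIntegral_mono' hDm
        intro p hp
        apply ENNReal.ofReal_le_ofReal
        obtain ⟨h1, h2, h3, h4⟩ := hp
        have hρ : 0 ≤ p.1 := by linarith
        have hu0 : 0 ≤ p.2 - p.1 := h1
        have huq : p.2 - p.1 ≤ q := by linarith [hqdef]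
        have hs2 : q/2 ≤ p.2 := by linarith [hqdef]
        have hlog : (Real.log (jn (p.2 - p.1)))^m ≤ L^m := by
          apply pow_le_pow_left₀ (log_jn_nonneg _)
          rw [hLdef]
          exact Real.log_le_log (jn_pos _) (jn_mono hu0 huq)
        have hβb : jn p.2 ^ (-β) ≤ (2:ℝ)^β * jn q ^ (-β) := by
          have := rpow_half_bound (e := -β) (by linarith) hq hs2
          rwa [neg_neg] at this
        have hg0 : 0 ≤ p.1 * jn p.1 ^ (-α) * jn (p.2 - p.1) ^ (-η) :=
          mul_nonneg (mul_nonneg hρ (Real.rpow_nonneg (jn_nonneg _) _))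
            (Real.rpow_nonneg (jn_nonneg _) _)
        have hsβ : (0:ℝ) ≤ jn p.2 ^ (-β) := Real.rpow_nonneg (jn_nonneg _) _
        calc f p = ((Real.log (jn (p.2 - p.1)))^m * jn p.2 ^ (-β)) *
              (p.1 * jn p.1 ^ (-α) * jn (p.2 - p.1) ^ (-η)) := by
              rw [hfdef]; ring
          _ ≤ (L^m * ((2:ℝ)^β * jn q ^ (-β))) *
              (p.1 * jn p.1 ^ (-α) * jn (p.2 - p.1) ^ (-η)) :=
              mul_le_mul_of_nonneg_right
                (mul_le_mul hlog hβb hsβ hLm) hg0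
          _ = ((2:ℝ)^β * L^m * jn q ^ (-β)) *
              (p.1 * jn p.1 ^ (-α) * jn (p.2 - p.1) ^ (-η)) := by ring
    _ = ENNReal.ofReal ((2:ℝ)^β * L^m * jn q ^ (-β)) *
          ∫⁻ p in Dtr t r, ENNReal.ofReal (p.1 * jn p.1 ^ (-α) * jn (p.2 - p.1) ^ (-η)) :=
        lint_ofReal_const_mul hc0 _ _
    _ ≤ ENNReal.ofReal ((2:ℝ)^β * L^m * jn q ^ (-β)) *
          ENNReal.ofReal (K * ((kap η q + 1) * jn q ^ (2-α) + jn q ^ (-η))) :=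
        mul_le_mul_right hco _
    _ = ENNReal.ofReal (((2:ℝ)^β * L^m * jn q ^ (-β)) *
          (K * ((kap η q + 1) * jn q ^ (2-α) + jn q ^ (-η)))) :=
        (ENNReal.ofReal_mul hc0).symm
    _ ≤ ENNReal.ofReal (2 * (2:ℝ)^β * K * L^m *
          (kap (α-1) q * jn q ^ (1-β-η) + kap η q * jn q ^ (2-α-β))) := by
        apply ENNReal.ofReal_le_ofReal
        rw [hkapA]
        have e1 : jn q ^ (-β) * jn q ^ (2-α) = jn q ^ (2-α-β) := by
          rw [← Real.rpow_add (jn_pos q)]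
          congr 1
          ring
        have e2 : jn q ^ (-β) * jn q ^ (-η) = jn q ^ (-β-η) := by
          rw [← Real.rpow_add (jn_pos q)]
          congr 1
        have e2le : jn q ^ (-β-η) ≤ jn q ^ (1-β-η) :=
          Real.rpow_le_rpow_of_exponent_le (jn_one_le q) (by linarith)
        have e3 : jn q ^ (2-α-β) ≤ jn q ^ (1-β-η) + kap η q * jn q ^ (2-α-β) := by
          rcases le_or_gt η 1 with h | h
          · have : jn q ^ (2-α-β) ≤ jn q ^ (1-β-η) :=
              Real.rpow_le_rpow_of_exponent_le (jn_one_le q) (by linarith)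
            nlinarith [mul_nonneg hkapN hA1]
          · rw [kap, if_pos h]
            nlinarith
        have bracket : jn q ^ (-β) * ((kap η q + 1) * jn q ^ (2-α) + jn q ^ (-η)) ≤
            2 * (jn q ^ (1-β-η) + kap η q * jn q ^ (2-α-β)) := by
          calc jn q ^ (-β) * ((kap η q + 1) * jn q ^ (2-α) + jn q ^ (-η))
              = (kap η q + 1) * (jn q ^ (-β) * jn q ^ (2-α)) +
                  jn q ^ (-β) * jn q ^ (-η) := by ring
            _ = (kap η q + 1) * jn q ^ (2-α-β) + jn q ^ (-β-η) := by rw [e1, e2]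
            _ ≤ 2 * (jn q ^ (1-β-η) + kap η q * jn q ^ (2-α-β)) := by nlinarith [e3, e2le]
        calc ((2:ℝ)^β * L^m * jn q ^ (-β)) *
              (K * ((kap η q + 1) * jn q ^ (2-α) + jn q ^ (-η)))
            = ((2:ℝ)^β * K * L^m) *
              (jn q ^ (-β) * ((kap η q + 1) * jn q ^ (2-α) + jn q ^ (-η))) := by ring
          _ ≤ ((2:ℝ)^β * K * L^m) *
              (2 * (jn q ^ (1-β-η) + kap η q * jn q ^ (2-α-β))) :=
              mul_le_mul_of_nonneg_left bracket
                (mul_nonneg (mul_nonneg h2β.le hK.le) hLm)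
          _ = 2 * (2:ℝ)^β * K * L^m *
              (1 * jn q ^ (1-β-η) + kap η q * jn q ^ (2-α-β)) := by ring


end
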